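/- Let k, ℓ, q, t ∈ ℕ and let D be a digraph on n vertices with δ(D) ≥ n − ℓ and with minimum out-degree and minimum in-degree both at least qt + |C| + 4k(k+ℓ)t + k, where C ⊆ V(D) is a given set. Let Q₁, …, Q_t ⊆ V(D) ∖ C be pairwise disjoint sets with |Q_i| ≤ q for each i ∈ [t]. Then there exist pairwise disjoint sets Q'₁, …, Q'_t ⊆ V(D) ∖ (C ∪ Q₁ ∪ ⋯ ∪ Q_t) such that for each i ∈ [t]: (i) the sets C, Q₁, …, Q_t, Q'₁, …, Q'_t are pairwise disjoint; (ii) |Q'_i| ≤ 4k(k+ℓ); and (iii) for every u ∈ Q_i ∪ Q'_i, both (u, Q'_i) and (Q'_i, u) are k-connected in D[Q_i ∪ Q'_i]. -/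

import Mathlib

/-- A digraph on the vertex type `V`, given by its adjacency (directed edge) relation. -/
structure Digr (V : Type) where
  Adj : V → V → Prop

namespace Digr

variable {V : Type}

/-- No loops. -/
def Loopless (G : Digr V) : Prop := ∀ v, ¬ G.Adj v v

/-- A tournament: every pair of distinct vertices is joined by exactly one directed edge. -/
def IsTournament (G : Digr V) : Prop :=
  G.Loopless ∧ ∀ u v : V, u ≠ v → (G.Adj u v ↔ ¬ G.Adj v u)

/-- A semicomplete digraph: every pair of distinct vertices is joined by at least one
directed edge (edges in both directions are allowed). -/
def IsSemicomplete (G : Digr V) : Prop :=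
  G.Loopless ∧ ∀ u v : V, u ≠ v → (G.Adj u v ∨ G.Adj v u)

/-- Out-neighbourhood `N⁺_G(v)`. -/
def outN (G : Digr V) (v : V) : Set V := {u | G.Adj v u}

/-- In-neighbourhood `N⁻_G(v)`. -/
def inN (G : Digr V) (v : V) : Set V := {u | G.Adj u v}

/-- Union of two digraphs (on the same vertex type). -/
def union (G H : Digr V) : Digr V := ⟨fun a b => G.Adj a b ∨ H.Adj a b⟩

/-- `l` is a directed path of `G` lying inside the vertex set `A`, from `u` to `v`. -/
def IsPathOn (G : Digr V) (A : Set V) (u v : V) (l : List V) : Prop :=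
  l.Nodup ∧ l.Chain' G.Adj ∧ (∀ x ∈ l, x ∈ A) ∧ l.head? = some u ∧ l.getLast? = some v

/-- There is a directed path of `G` inside `A` from `u` to `v`. -/
def Reaches (G : Digr V) (A : Set V) (u v : V) : Prop :=
  ∃ l, G.IsPathOn A u v l

/-- The induced subdigraph of `G` on `W` is strongly `k`-connected: `|W| ≥ k + 1` and for
every ordered pair of distinct vertices of `W` and every `S ⊆ W ∖ {u,v}` with `|S| ≤ k - 1`
there is a directed path from `u` to `v` avoiding `S`. -/
def StronglyConnOn (G : Digr V) (W : Set V) (k : ℕ) : Prop :=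
  k + 1 ≤ W.ncard ∧
  ∀ u ∈ W, ∀ v ∈ W, u ≠ v → ∀ S : Set V, S ⊆ W \ {u, v} → S.ncard < k →
    G.Reaches (W \ S) u v

/-- Strong `c`-connectedness for a real parameter `c` (the condition on the removed set `S`
is `|S| ≤ c - 1`). -/
def StronglyConnOnR (G : Digr V) (W : Set V) (c : ℝ) : Prop :=
  c + 1 ≤ (W.ncard : ℝ) ∧
  ∀ u ∈ W, ∀ v ∈ W, u ≠ v → ∀ S : Set V, S ⊆ W \ {u, v} → (S.ncard : ℝ) ≤ c - 1 →
    G.Reaches (W \ S) u v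

/-- `l` is a directed cycle of `G` (length at least 3) whose vertex set is `C`. -/
def IsCycleOn (G : Digr V) (C : Set V) (l : List V) : Prop :=
  3 ≤ l.length ∧ l.Nodup ∧ (∀ x, x ∈ l ↔ x ∈ C) ∧ l.Chain' G.Adj ∧
  ∃ a b, l.getLast? = some a ∧ l.head? = some b ∧ G.Adj a b

/-- The pair `(v, U)` is `k`-connected in the induced subdigraph of `G` on `A`: after
deleting any `S ⊆ A ∖ {v}` with `|S| ≤ k - 1` there is a path from `v` to some vertex
of `U ∖ S` inside `A ∖ S`. -/
def VtxSetConn (G : Digr V) (A : Set V) (v : V) (U : Set V) (k : ℕ) : Prop :=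
  ∀ S : Set V, S ⊆ A \ {v} → S.ncard < k → ∃ u ∈ U \ S, G.Reaches (A \ S) v u

/-- The pair `(U, v)` is `k`-connected in the induced subdigraph of `G` on `A`. -/
def SetVtxConn (G : Digr V) (A : Set V) (U : Set V) (v : V) (k : ℕ) : Prop :=
  ∀ S : Set V, S ⊆ A \ {v} → S.ncard < k → ∃ u ∈ U \ S, G.Reaches (A \ S) u v

end Digr

open Digr

/-!
Treat `Q₁, …, Q_t` one at a time, choosing each `Q'_i` outside `C`, all `Q_j` and the
earlier `Q'_j`; there are fewer than `qt + |C| + 4k(k+ℓ)t` such vertices, so every vertex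
keeps `k` out- and `k` in-neighbours to choose from.

For a single set `Q`, repeatedly delete a vertex with at least `k` out-neighbours among the
remaining ones. The set `T` left at the end has every out-degree inside `T` below `k`, and since
each vertex is adjacent to all but `ℓ` others, `|T| ≤ 2k + ℓ`. Give every vertex of `T` `k`
fresh out-neighbours. After removing fewer than `k` vertices, each peeled vertex keeps an
out-neighbour among those peeled after it or left in `T`, and each vertex of `T` keeps a fresh
out-neighbour; following these leads from any vertex of `Q` to a fresh one. The same construction in the reverse digraph handles `(Q'_i, u)`,
and `|Q'_i| ≤ 2k(2k + ℓ) ≤ 4k(k + ℓ)`.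
-/

namespace Digr

variable {V : Type} {D : Digr V}

def rev (D : Digr V) : Digr V := ⟨fun a b => D.Adj b a⟩

@[simp] lemma rev_outN (D : Digr V) : D.rev.outN = D.inN := rfl

@[simp] lemma rev_inN (D : Digr V) : D.rev.inN = D.outN := rfl

lemma Reaches.refl {A : Set V} {u : V} (hu : u ∈ A) : D.Reaches A u u :=
  ⟨[u], List.nodup_singleton u, List.isChain_singleton u, by simpa using hu, rfl, rfl⟩

lemma Reaches.mono {A B : Set V} (hAB : A ⊆ B) {u v : V} (h : D.Reaches A u v) :
    D.Reaches B u v :=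
  let ⟨l, hnd, hch, hA, hhd, hlast⟩ := h
  ⟨l, hnd, hch, fun x hx => hAB (hA x hx), hhd, hlast⟩

lemma Reaches.cons {A B : Set V} {x y v : V} (hxy : D.Adj x y) (hx : x ∈ A) (hxB : x ∉ B)
    (hBA : B ⊆ A) (h : D.Reaches B y v) : D.Reaches A x v := by
  obtain ⟨l, hnd, hch, hB, hhd, hlast⟩ := h
  obtain _ | ⟨a, l⟩ := l
  · simp at hhd
  obtain rfl : a = y := by simpa using hhd
  refine ⟨x :: a :: l, ?_, ?_, ?_, rfl, ?_⟩
  · exact List.nodup_cons.mpr ⟨fun hxl => hxB (hB x hxl), hnd⟩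
  · exact List.isChain_cons_cons.mpr ⟨hxy, hch⟩
  · intro z hz
    rcases List.mem_cons.mp hz with rfl | hz
    exacts [hx, hBA (hB z hz)]
  · rwa [List.getLast?_cons_cons]

lemma Reaches.of_rev {A : Set V} {u v : V} (h : D.rev.Reaches A u v) : D.Reaches A v u := by
  obtain ⟨l, hnd, hch, hA, hhd, hlast⟩ := h
  refine ⟨l.reverse, List.nodup_reverse.mpr hnd, ?_, fun x hx => hA x (List.mem_reverse.mp hx),
    by rwa [List.head?_reverse], by rwa [List.getLast?_reverse]⟩
  exact List.isChain_reverse.mpr hch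

lemma setVtxConn_of_rev {A U : Set V} {u : V} {k : ℕ} (h : D.rev.VtxSetConn A u U k) :
    D.SetVtxConn A U u k := fun S hS hSk =>
  let ⟨y, hy, hr⟩ := h S hS hSk
  ⟨y, hy, hr.of_rev⟩

def OutSparse (D : Digr V) (k : ℕ) (T : Set V) : Prop :=
  ∀ x ∈ T, (D.outN x ∩ (T \ {x})).ncard < k

def RobustlyReaches (D : Digr V) (A O : Set V) (k : ℕ) : Prop :=
  ∀ S : Set V, S.ncard < k → ∀ u ∈ A \ S, ∃ y ∈ O \ S, D.Reaches (A \ S) u y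

def IsHub (D : Digr V) (k : ℕ) (Q O : Set V) : Prop :=
  ∀ u ∈ Q ∪ O, D.VtxSetConn (Q ∪ O) u O k ∧ D.SetVtxConn (Q ∪ O) O u k

lemma RobustlyReaches.vtxSetConn {A O : Set V} {k : ℕ} (h : D.RobustlyReaches A O k) {u : V}
    (hu : u ∈ A) : D.VtxSetConn A u O k := fun S hS hSk =>
  h S hSk u ⟨hu, fun huS => (hS huS).2 rfl⟩

variable [Finite V]

lemma exists_outSparse_robustlyReaches (D : Digr V) (k : ℕ) (R : Set V) :
    ∃ T, D.OutSparse k T ∧ ∀ O, Disjoint R O → (∀ x ∈ T, k ≤ (D.outN x ∩ O).ncard) →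
      D.RobustlyReaches (R ∪ O) O k := by
  induction R using WellFoundedLT.induction with
  | _ R ih =>
  by_cases hsparse : D.OutSparse k R
  · refine ⟨R, hsparse, fun O hRO hRk S hSk u hu => ?_⟩
    rcases hu with ⟨huR | huO, huS⟩
    · obtain ⟨y, ⟨hadj, hyO⟩, hyS⟩ :=
        Set.exists_mem_notMem_of_ncard_lt_ncard (hSk.trans_le (hRk u huR))
      exact ⟨y, ⟨hyO, hyS⟩, .cons hadj ⟨.inl huR, huS⟩ (fun hu => hRO.ne_of_mem huR hu.1 rfl)
        (Set.sdiff_subset_sdiff_left Set.subset_union_right) (.refl ⟨hyO, hyS⟩)⟩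
    · exact ⟨u, ⟨huO, huS⟩, .refl ⟨.inr huO, huS⟩⟩
  obtain ⟨x, hxR, hxk⟩ : ∃ x ∈ R, k ≤ (D.outN x ∩ (R \ {x})).ncard := by
    simpa [OutSparse] using hsparse
  obtain ⟨T, hT, hreach⟩ := ih (R \ {x}) (Set.sdiff_singleton_ssubset.mpr hxR)
  refine ⟨T, hT, fun O hRO hTk S hSk u hu => ?_⟩
  have hsub : (R \ {x} ∪ O) \ S ⊆ (R ∪ O) \ S :=
    Set.sdiff_subset_sdiff_left (Set.union_subset_union_left O Set.sdiff_subset)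
  have hreach' := hreach O (hRO.mono_left Set.sdiff_subset) hTk S hSk
  by_cases hux : u = x
  · subst hux
    obtain ⟨y, ⟨hadj, hyR⟩, hyS⟩ :=
      Set.exists_mem_notMem_of_ncard_lt_ncard (hSk.trans_le hxk)
    obtain ⟨z, hz, hyz⟩ := hreach' y ⟨.inl hyR, hyS⟩
    refine ⟨z, hz, .cons hadj hu ?_ hsub hyz⟩
    rintro ⟨hxR' | hxO, -⟩
    exacts [hxR'.2 rfl, hRO.ne_of_mem hxR hxO rfl]
  · obtain ⟨z, hz, huz⟩ := hreach' u ⟨hu.1.imp_left fun huR => ⟨huR, hux⟩, hu.2⟩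
    exact ⟨z, hz, huz.mono hsub⟩

open Finset in
/-- A `k`-out-sparse set spans fewer than `k|T|` edges, while each of its vertices misses at
most `ℓ` others; counting ordered pairs of `T` gives `|T|² < |T|(2k + ℓ)`. -/
lemma OutSparse.ncard_le {k ℓ : ℕ} {T : Set V} (hT : D.OutSparse k T)
    (hnon : ∀ v, (D.outN v ∪ D.inN v)ᶜ.ncard ≤ ℓ) : T.ncard ≤ 2 * k + ℓ := by
  classical
  obtain ⟨F, rfl⟩ := T.toFinite.exists_finset_coe
  set outdeg : V → ℕ := fun x => #{y ∈ F | D.Adj x y ∧ x ≠ y}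
  set indeg : V → ℕ := fun y => #{x ∈ F | D.Adj x y ∧ x ≠ y}
  have hout : ∀ x ∈ F, outdeg x + 1 ≤ k := fun x hx => by
    have hx' : (D.outN x ∩ (↑F \ {x})).ncard = outdeg x := by
      dsimp only [outdeg]
      rw [← Set.ncard_coe_finset]
      congr 1
      ext y
      simp [outN, and_left_comm, eq_comm]
    have := hT x hx
    omega
  have hcover : ∀ x ∈ F, #F ≤ outdeg x + indeg x + ℓ + 1 := fun x hx => by
    have hnon' : #{y ∈ F | ¬ D.Adj x y ∧ ¬ D.Adj y x} ≤ ℓ := by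
      refine le_trans ?_ (hnon x)
      rw [← Set.ncard_coe_finset]
      exact Set.ncard_le_ncard fun y hy => by simp_all [outN, inN]
    have hsub : F.erase x ⊆ {y ∈ F | D.Adj x y ∧ x ≠ y} ∪ {y ∈ F | D.Adj y x ∧ y ≠ x} ∪
        {y ∈ F | ¬ D.Adj x y ∧ ¬ D.Adj y x} := fun y hy => by
      simp only [mem_erase, mem_union, mem_filter] at hy ⊢
      grind
    have h₁ := card_le_card hsub
    have h₂ := card_union_le ({y ∈ F | D.Adj x y ∧ x ≠ y} ∪ {y ∈ F | D.Adj y x ∧ y ≠ x})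
      {y ∈ F | ¬ D.Adj x y ∧ ¬ D.Adj y x}
    have h₃ := card_union_le {y ∈ F | D.Adj x y ∧ x ≠ y} {y ∈ F | D.Adj y x ∧ y ≠ x}
    have h₄ := card_erase_add_one hx
    dsimp only [outdeg, indeg]
    omega
  have hswap : ∑ x ∈ F, outdeg x = ∑ x ∈ F, indeg x :=
    sum_card_bipartiteAbove_eq_sum_card_bipartiteBelow (r := fun x y => D.Adj x y ∧ x ≠ y)
  have hsum := sum_le_sum hcover
  have hsum' := sum_le_sum hout
  simp only [sum_add_distrib, sum_const, smul_eq_mul, ← hswap] at hsum hsum'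
  rw [Set.ncard_coe_finset]
  nlinarith

lemma exists_disjoint_forall_le_ncard_outN_inter (D : Digr V) {k : ℕ} (T U : Set V)
    (hdeg : ∀ x ∈ T, U.ncard + k ≤ (D.outN x).ncard) :
    ∃ O, Disjoint O U ∧ O.ncard ≤ T.ncard * k ∧ ∀ x ∈ T, k ≤ (D.outN x ∩ O).ncard := by
  induction T, T.toFinite using Set.Finite.induction_on with
  | empty => exact ⟨∅, Set.empty_disjoint U, by simp, by simp⟩
  | @insert a T haT _ ih =>
    obtain ⟨O, hOU, hO, hTO⟩ := ih fun x hx => hdeg x (Set.mem_insert_of_mem a hx)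
    obtain ⟨N, hN, hNk⟩ := Set.exists_subset_card_eq (s := D.outN a \ U) (n := k) <| by
      have := Set.le_ncard_sdiff U (D.outN a)
      have := hdeg a (Set.mem_insert a T)
      omega
    refine ⟨O ∪ N, hOU.union_left (Set.disjoint_sdiff_left.mono_left hN), ?_, ?_⟩
    · rw [Set.ncard_insert_of_notMem haT]
      have := Set.ncard_union_le O N
      rw [add_mul, one_mul]
      omega
    · rintro x (rfl | hx)
      · exact hNk.ge.trans <| Set.ncard_le_ncard fun y hy =>
          ⟨(hN hy).1, Set.mem_union_right O hy⟩
      · exact (hTO x hx).trans <|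
          Set.ncard_le_ncard (Set.inter_subset_inter_right _ Set.subset_union_left)

lemma exists_hub {k ℓ : ℕ} (hnon : ∀ v, (D.outN v ∪ D.inN v)ᶜ.ncard ≤ ℓ) {Q U : Set V}
    (hQU : Q ⊆ U) (hout : ∀ v, U.ncard + k ≤ (D.outN v).ncard)
    (hin : ∀ v, U.ncard + k ≤ (D.inN v).ncard) :
    ∃ O, Disjoint O U ∧ O.ncard ≤ 4 * k * (k + ℓ) ∧ D.IsHub k Q O := by
  have hnon_rev : ∀ v, (D.rev.outN v ∪ D.rev.inN v)ᶜ.ncard ≤ ℓ := fun v => by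
    simpa [Set.union_comm] using hnon v
  obtain ⟨T₁, hT₁, hreach₁⟩ := D.exists_outSparse_robustlyReaches k Q
  obtain ⟨T₂, hT₂, hreach₂⟩ := D.rev.exists_outSparse_robustlyReaches k Q
  obtain ⟨O₁, hO₁U, hO₁, hT₁O₁⟩ :=
    D.exists_disjoint_forall_le_ncard_outN_inter T₁ U fun x _ => hout x
  obtain ⟨O₂, hO₂U, hO₂, hT₂O₂⟩ :=
    D.rev.exists_disjoint_forall_le_ncard_outN_inter T₂ U fun x _ => hin x
  have hOU : Disjoint (O₁ ∪ O₂) U := hO₁U.union_left hO₂U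
  have hQO : Disjoint Q (O₁ ∪ O₂) := (hOU.mono_right hQU).symm
  refine ⟨O₁ ∪ O₂, hOU, ?_, fun u hu => ⟨?_, ?_⟩⟩
  · have h₁ := Nat.mul_le_mul_right k (hT₁.ncard_le hnon)
    have h₂ := Nat.mul_le_mul_right k (hT₂.ncard_le hnon_rev)
    have := Set.ncard_union_le O₁ O₂
    nlinarith
  · refine (hreach₁ _ hQO fun x hx => (hT₁O₁ x hx).trans ?_).vtxSetConn hu
    exact Set.ncard_le_ncard (Set.inter_subset_inter_right _ Set.subset_union_left)
  · refine setVtxConn_of_rev ((hreach₂ _ hQO fun x hx => (hT₂O₂ x hx).trans ?_).vtxSetConn hu)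
    exact Set.ncard_le_ncard (Set.inter_subset_inter_right _ Set.subset_union_right)

lemma exists_hubs {k ℓ t : ℕ} (hnon : ∀ v, (D.outN v ∪ D.inN v)ᶜ.ncard ≤ ℓ)
    (Q : Fin t → Set V) (U : Set V) (hQU : ∀ i, Q i ⊆ U)
    (hout : ∀ v, U.ncard + 4 * k * (k + ℓ) * t + k ≤ (D.outN v).ncard)
    (hin : ∀ v, U.ncard + 4 * k * (k + ℓ) * t + k ≤ (D.inN v).ncard) :
    ∃ Q' : Fin t → Set V, (∀ i, Disjoint (Q' i) U) ∧
      (∀ i j, i ≠ j → Disjoint (Q' i) (Q' j)) ∧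
      ∀ i, (Q' i).ncard ≤ 4 * k * (k + ℓ) ∧ D.IsHub k (Q i) (Q' i) := by
  induction t generalizing U with
  | zero => exact ⟨fun _ => ∅, Fin.elim0, fun i => i.elim0, fun i => i.elim0⟩
  | succ t ih =>
    obtain ⟨O, hOU, hO, hhub⟩ := exists_hub hnon (hQU 0)
      (fun v => (Nat.add_le_add_right (Nat.le_add_right _ _) k).trans (hout v))
      (fun v => (Nat.add_le_add_right (Nat.le_add_right _ _) k).trans (hin v))
    have hbound :
        (U ∪ O).ncard + 4 * k * (k + ℓ) * t ≤ U.ncard + 4 * k * (k + ℓ) * (t + 1) := by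
      have := Set.ncard_union_le U O
      nlinarith
    obtain ⟨Q', hQ'U, hQ'disj, hQ'⟩ := ih (fun i => Q i.succ) (U ∪ O)
      (fun i => (hQU i.succ).trans Set.subset_union_left)
      (fun v => le_trans (by omega) (hout v)) (fun v => le_trans (by omega) (hin v))
    refine ⟨Fin.cons O Q', ?_, ?_, ?_⟩
    · refine Fin.cases hOU fun i => ?_
      exact (hQ'U i).mono_right Set.subset_union_left
    · intro i j hij
      induction i using Fin.cases <;> induction j using Fin.cases
      · exact absurd rfl hij
      · exact ((hQ'U _).mono_right Set.subset_union_right).symm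
      · exact (hQ'U _).mono_right Set.subset_union_right
      · exact hQ'disj _ _ (by simpa using hij)
    · exact Fin.cases ⟨hO, hhub⟩ hQ'

end Digr

theorem stmt11_general {V : Type} [Fintype V] (k ℓ q t n : ℕ)
    (D : Digr V) (hn : Fintype.card V = n) (C : Set V)
    (hδ : ∀ v, n - ℓ ≤ (D.outN v ∪ D.inN v).ncard)
    (hout : ∀ v, q * t + C.ncard + 4 * k * (k + ℓ) * t + k ≤ (D.outN v).ncard)
    (hin : ∀ v, q * t + C.ncard + 4 * k * (k + ℓ) * t + k ≤ (D.inN v).ncard)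
    (Q : Fin t → Set V)
    (hQq : ∀ i, (Q i).ncard ≤ q) :
    ∃ Q' : Fin t → Set V,
      (∀ i, Q' i ⊆ Set.univ \ (C ∪ ⋃ j, Q j)) ∧
      -- (i) C, Q₁,…,Q_t, Q'₁,…,Q'_t are pairwise disjoint
      (∀ i, Disjoint (Q' i) C) ∧
      (∀ i j, Disjoint (Q' i) (Q j)) ∧
      (∀ i j, i ≠ j → Disjoint (Q' i) (Q' j)) ∧
      -- (ii)
      (∀ i, (Q' i).ncard ≤ 4 * k * (k + ℓ)) ∧
      -- (iii)
      (∀ i, ∀ u ∈ Q i ∪ Q' i,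
        D.VtxSetConn (Q i ∪ Q' i) u (Q' i) k ∧
        D.SetVtxConn (Q i ∪ Q' i) (Q' i) u k) := by
  have hnon : ∀ v, (D.outN v ∪ D.inN v)ᶜ.ncard ≤ ℓ := fun v => by
    have := Set.ncard_add_ncard_compl (D.outN v ∪ D.inN v)
    have := hδ v
    rw [Nat.card_eq_fintype_card, hn] at *
    omega
  have hU : (C ∪ ⋃ j, Q j).ncard ≤ C.ncard + q * t := calc
    _ ≤ C.ncard + ∑ j, (Q j).ncard :=
      (Set.ncard_union_le _ _).trans (Nat.add_le_add_left (Set.ncard_iUnion_le_of_fintype Q) _)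
    _ ≤ C.ncard + q * t := by
      grw [Finset.sum_le_sum fun j _ => hQq j]
      simp [mul_comm]
  obtain ⟨Q', hQ'U, hdisj, hQ'⟩ := exists_hubs (k := k) hnon Q (C ∪ ⋃ j, Q j)
    (fun i => (Set.subset_iUnion Q i).trans Set.subset_union_right)
    (fun v => le_trans (by omega) (hout v)) (fun v => le_trans (by omega) (hin v))
  refine ⟨Q', fun i => Set.subset_sdiff.mpr ⟨Set.subset_univ _, hQ'U i⟩,
    fun i => (hQ'U i).mono_right Set.subset_union_left,
    fun i j => (hQ'U i).mono_right ((Set.subset_iUnion Q j).trans Set.subset_union_right),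
    hdisj, fun i => (hQ' i).1, fun i => (hQ' i).2⟩

/-- **Claim 3.1.** Given a digraph `D` on `n` vertices with `δ(D) ≥ n - ℓ`, minimum out-
and in-degree at least `qt + |C| + 4k(k+ℓ)t + k`, a set `C`, and pairwise disjoint sets
`Q₁,…,Q_t ⊆ V(D) ∖ C` with `|Q_i| ≤ q`, there exist pairwise disjoint sets
`Q'₁,…,Q'_t ⊆ V(D) ∖ (C ∪ ⋃ Q_j)` with `|Q'_i| ≤ 4k(k+ℓ)` such that for every
`u ∈ Q_i ∪ Q'_i`, both `(u, Q'_i)` and `(Q'_i, u)` are `k`-connected in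
`D[Q_i ∪ Q'_i]`. -/
theorem stmt11 {V : Type} [Fintype V] (k ℓ q t n : ℕ)
    (D : Digr V) (hn : Fintype.card V = n) (C : Set V)
    (hδ : ∀ v, n - ℓ ≤ (D.outN v ∪ D.inN v).ncard)
    (hout : ∀ v, q * t + C.ncard + 4 * k * (k + ℓ) * t + k ≤ (D.outN v).ncard)
    (hin : ∀ v, q * t + C.ncard + 4 * k * (k + ℓ) * t + k ≤ (D.inN v).ncard)
    (Q : Fin t → Set V) (hQC : ∀ i, Q i ⊆ Set.univ \ C)
    (hQdisj : ∀ i j, i ≠ j → Disjoint (Q i) (Q j))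
    (hQq : ∀ i, (Q i).ncard ≤ q) :
    ∃ Q' : Fin t → Set V,
      (∀ i, Q' i ⊆ Set.univ \ (C ∪ ⋃ j, Q j)) ∧
      -- (i) C, Q₁,…,Q_t, Q'₁,…,Q'_t are pairwise disjoint
      (∀ i, Disjoint (Q' i) C) ∧
      (∀ i j, Disjoint (Q' i) (Q j)) ∧
      (∀ i j, i ≠ j → Disjoint (Q' i) (Q' j)) ∧
      -- (ii)
      (∀ i, (Q' i).ncard ≤ 4 * k * (k + ℓ)) ∧
      -- (iii)
      (∀ i, ∀ u ∈ Q i ∪ Q' i,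
        D.VtxSetConn (Q i ∪ Q' i) u (Q' i) k ∧
        D.SetVtxConn (Q i ∪ Q' i) (Q' i) u k) :=
  stmt11_general k ℓ q t n D hn C hδ hout hin Q hQq
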